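/- arXiv:1809.00956 — 2 statements merged into one kernel-verified Lean document; each statement's English description precedes it below -/
import Mathlib

section
/- Let φ : 𝒫 → 𝒬 be a surjective order-preserving map of finite posets. Then I_φ(𝒫) is a subalgebra of the incidence algebra I(𝒫) (it contains δ and is closed under ∗), and the pushforward φ_* : I_φ(𝒫) → I(𝒬) is an algebra homomorphism, i.e., φ_*(g ∗ h) = φ_*g ∗ φ_*h for all g, h ∈ I_φ(𝒫). -/
open scoped BigOperators InnerProductSpace Pointwise

noncomputable section

/-- Euclidean space `ℝ^d`. -/
abbrev Euc (d : ℕ) : Type := EuclideanSpace ℝ (Fin d)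

namespace GramAngles

variable {d : ℕ}

/-- The conical (positive) hull of a set. -/
def posHull (S : Set (Euc d)) : Set (Euc d) :=
  {u | ∃ c : ℝ, ∃ p ∈ S, 0 ≤ c ∧ u = c • p}

/-- The dimension of a set: the rank of the linear subspace parallel to its affine hull. -/
def sdim (S : Set (Euc d)) : ℕ := Module.finrank ℝ (vectorSpan ℝ S)

/-- A polyhedral cone with apex at the origin: a finitely generated convex cone. -/
def IsPolyhedralCone (C : Set (Euc d)) : Prop :=
  ∃ (n : ℕ) (v : Fin n → Euc d),
    C = {x | ∃ c : Fin n → ℝ, (∀ i, 0 ≤ c i) ∧ x = ∑ i, c i • v i}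

/-- A cone angle on `ℝ^d`: a simple, normalized valuation on polyhedral cones. -/
structure ConeAngle (d : ℕ) where
  toFun : Set (Euc d) → ℝ
  zero' : toFun {0} = 0
  union' : ∀ C C' : Set (Euc d), IsPolyhedralCone C → IsPolyhedralCone C' →
    IsPolyhedralCone (C ∪ C') → IsPolyhedralCone (C ∩ C') →
    toFun (C ∪ C') = toFun C + toFun C' - toFun (C ∩ C')
  simple' : ∀ C : Set (Euc d), IsPolyhedralCone C → sdim C < d → toFun C = 0
  norm' : toFun Set.univ = 1

/-- A (convex) polytope: the convex hull of a nonempty finite point set. -/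
def IsPolytope (P : Set (Euc d)) : Prop :=
  ∃ s : Finset (Euc d), s.Nonempty ∧ P = convexHull ℝ (s : Set (Euc d))

/-- Faces of a polytope are its exposed subsets (including `∅` and `P` itself). -/
def IsFace (P F : Set (Euc d)) : Prop := IsExposed ℝ P F

open Classical in
/-- A chosen point in the relative interior of `F`. -/
def relPt (F : Set (Euc d)) : Euc d :=
  if h : (intrinsicInterior ℝ F).Nonempty then h.some else 0

/-- The tangent (inner) cone `T_F G = cone(-q + G) + L(G)^⊥`, `q ∈ relint F`. -/
def innerCone (F G : Set (Euc d)) : Set (Euc d) :=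
  posHull ((fun x => x - relPt F) '' G) + (((vectorSpan ℝ G)ᗮ : Submodule ℝ (Euc d)) : Set (Euc d))

/-- The normal cone `N_F G` of `G` at a face `F`. -/
def normalCone (F G : Set (Euc d)) : Set (Euc d) :=
  {c | ∀ x ∈ F, ∀ y ∈ G, ⟪c, y⟫_ℝ ≤ ⟪c, x⟫_ℝ}

/-- The outer cone `O_F G = N_F G + L(F)`. -/
def outerCone (F G : Set (Euc d)) : Set (Euc d) :=
  normalCone F G + ((vectorSpan ℝ F : Submodule ℝ (Euc d)) : Set (Euc d))

/-- Interior angle of `G` at its face `F`, measured by the cone angle `α`. -/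
def intAngle (α : ConeAngle d) (F G : Set (Euc d)) : ℝ := α.toFun (innerCone F G)

/-- Exterior angle of `G` at its face `F`, measured by the cone angle `α`. -/
def extAngle (α : ConeAngle d) (F G : Set (Euc d)) : ℝ := α.toFun (outerCone F G)

/-- `α̂_i(P)`: sum of interior angles over all `i`-dimensional (nonempty) faces of `P`. -/
def intAngleSum (α : ConeAngle d) (P : Set (Euc d)) (i : ℕ) : ℝ :=
  ∑ᶠ F ∈ {F : Set (Euc d) | IsFace P F ∧ F.Nonempty ∧ sdim F = i}, intAngle α F P

/-- `α̌_i(P)`: sum of exterior angles over all `i`-dimensional (nonempty) faces of `P`. -/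
def extAngleSum (α : ConeAngle d) (P : Set (Euc d)) (i : ℕ) : ℝ :=
  ∑ᶠ F ∈ {F : Set (Euc d) | IsFace P F ∧ F.Nonempty ∧ sdim F = i}, extAngle α F P

/-- A zonotope: a translate of a Minkowski sum of finitely many segments. -/
def IsZonotope (Z : Set (Euc d)) : Prop :=
  ∃ (t : Euc d) (n : ℕ) (z : Fin n → Euc d),
    Z = {x | ∃ l : Fin n → ℝ, (∀ i, |l i| ≤ 1) ∧ x = t + ∑ i, l i • z i}

/-- The face of `P` on which the linear functional `⟪c, ·⟫` is maximized. -/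
def maxFace (P : Set (Euc d)) (c : Euc d) : Set (Euc d) :=
  {x ∈ P | ∀ y ∈ P, ⟪c, y⟫_ℝ ≤ ⟪c, x⟫_ℝ}

/-- A belt polytope: a polytope whose normal fan is the fan induced by a central
hyperplane arrangement (two functionals maximize the same face iff they have the
same sign pattern with respect to the arrangement). -/
def IsBeltPolytope (P : Set (Euc d)) : Prop :=
  IsPolytope P ∧ ∃ (k : ℕ) (z : Fin k → Euc d), (∀ i, z i ≠ 0) ∧
    ∀ c c' : Euc d,
      ((∀ i, Real.sign ⟪z i, c⟫_ℝ = Real.sign ⟪z i, c'⟫_ℝ) ↔ maxFace P c = maxFace P c')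

/-- The set of flats of a polytope: linear subspaces parallel to nonempty faces,
ordered by inclusion (as a subtype of `Submodule ℝ (Euc d)`). -/
def Flats (P : Set (Euc d)) : Set (Submodule ℝ (Euc d)) :=
  {L | ∃ F : Set (Euc d), IsFace P F ∧ F.Nonempty ∧ L = vectorSpan ℝ F}

/-- Strictly increasing chains from `a` to `c` in a poset, encoded as lists. -/
def chainsFromTo {β : Type*} [Preorder β] (a c : β) : Set (List β) :=
  {l | l.Chain' (· < ·) ∧ l.head? = some a ∧ l.getLast? = some c}

/-- The Möbius function of a poset, via Philip Hall's chain formula. -/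
def mob {β : Type*} [Preorder β] (a c : β) : ℝ :=
  ∑ᶠ l ∈ chainsFromTo a c, (-1 : ℝ) ^ (l.length + 1)

/-- Whitney numbers of the first kind of a ranked poset with minimum `bot`. -/
def whitney1 {β : Type*} [Preorder β] (rk : β → ℕ) (bot : β) (i : ℕ) : ℝ :=
  ∑ᶠ a ∈ {a : β | rk a = i}, mob bot a

/-- Flag-Whitney numbers of the second kind: the number of chains with rank set `S`. -/
def flagW2 {β : Type*} [Preorder β] (rk : β → ℕ) (S : Finset ℕ) : ℕ :=
  Nat.card {l : List β // l.Chain' (· < ·) ∧ l.map rk = S.sort (· ≤ ·)}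

/-- Flag-Whitney numbers of the first kind:
`w_S = Σ μ(0̂,c₁) μ(c₁,c₂) ⋯ μ(c_{k-1},c_k)` over chains with rank set `S`. -/
def flagW1 {β : Type*} [Preorder β] (rk : β → ℕ) (bot : β) (S : Finset ℕ) : ℝ :=
  ∑ᶠ l ∈ {l : List β | l.Chain' (· < ·) ∧ l.map rk = S.sort (· ≤ ·)},
    (List.zipWith mob (bot :: l) l).prod

/-- Chains of nonempty faces of `P` whose dimensions are exactly the set `S`. -/
def faceChains (P : Set (Euc d)) (S : Finset ℕ) : Set (List (Set (Euc d))) :=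
  {l | (∀ F ∈ l, IsFace P F ∧ F.Nonempty) ∧ l.Chain' (· ⊂ ·) ∧ l.map sdim = S.sort (· ≤ ·)}

/-- The interior flag-angle `α̂_S(P) = Σ α̂(F₁,F₂) α̂(F₂,F₃) ⋯ α̂(F_k,P)`. -/
def intFlag (α : ConeAngle d) (P : Set (Euc d)) (S : Finset ℕ) : ℝ :=
  ∑ᶠ l ∈ faceChains P S, (List.zipWith (intAngle α) l (l.drop 1 ++ [P])).prod

/-- The exterior flag-angle `α̌_S(P) = Σ α̌(F₁,F₂) α̌(F₂,F₃) ⋯ α̌(F_k,P)`. -/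
def extFlag (α : ConeAngle d) (P : Set (Euc d)) (S : Finset ℕ) : ℝ :=
  ∑ᶠ l ∈ faceChains P S, (List.zipWith (extAngle α) l (l.drop 1 ++ [P])).prod

/-- Membership in the incidence algebra: vanishing off the order relation. -/
def memIA {β : Type*} [Preorder β] (h : β → β → ℝ) : Prop :=
  ∀ a c, ¬ a ≤ c → h a c = 0

/-- Convolution product of the incidence algebra. -/
def conv {β : Type*} [Preorder β] (g h : β → β → ℝ) (a c : β) : ℝ :=
  ∑ᶠ (b : β) (_ : a ≤ b ∧ b ≤ c), g a b * h b c

/-- The product `∗_k`, summing over middle elements of rank `k`. -/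
def convk {β : Type*} (rk : β → ℕ) (k : ℕ) (g h : β → β → ℝ) (a c : β) : ℝ :=
  ∑ᶠ (b : β) (_ : rk b = k), g a b * h b c

/-- The pushforward `φ_* h (q,q') = |φ⁻¹(q')|⁻¹ Σ_{p ∈ φ⁻¹(q), p' ∈ φ⁻¹(q')} h(p,p')`. -/
def pushf {β γ : Type*} (φ : β → γ) (h : β → β → ℝ) (q q' : γ) : ℝ :=
  (Nat.card {p : β // φ p = q'} : ℝ)⁻¹ *
    ∑ᶠ (p : β) (_ : φ p = q) (p' : β) (_ : φ p' = q'), h p p'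

/-- The subspace `I_φ(𝒫)`: elements whose fiberwise column sums are independent of
the representative of the target fiber. -/
def memIphi {β γ : Type*} [Preorder β] (φ : β → γ) (h : β → β → ℝ) : Prop :=
  memIA h ∧ ∀ (q : γ) (p₁ p₂ : β), φ p₁ = φ p₂ →
    (∑ᶠ (p : β) (_ : φ p = q), h p p₁) = (∑ᶠ (p : β) (_ : φ p = q), h p p₂)

open Classical in
/-- The pullback `φ^* g (p,p') = g(φ p, φ p')` for `p ≤ p'`, else `0`. -/
def pullb {β γ : Type*} [Preorder β] (φ : β → γ) (g : γ → γ → ℝ) (p p' : β) : ℝ :=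
  if p ≤ p' then g (φ p) (φ p') else 0

open Classical in
/-- The identity `δ` of the incidence algebra. -/
def deltaIA {β : Type*} (a c : β) : ℝ := if a = c then 1 else 0

end GramAngles

namespace GramAngles

section Aux

open Classical

variable {β γ : Type*} [Fintype β] [Fintype γ]

private lemma finsum_cond (P : β → Prop) (f : β → ℝ) :
    (∑ᶠ (b : β) (_ : P b), f b) = ∑ b, if P b then f b else 0 := by
  rw [finsum_eq_sum_of_fintype]
  exact Finset.sum_congr rfl fun b _ => finsum_eq_if

private lemma ite_sum (P : Prop) [Decidable P] (f : β → ℝ) :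
    (if P then ∑ x, f x else 0) = ∑ x, if P then f x else 0 := by
  split_ifs with h
  · rfl
  · exact Finset.sum_const_zero.symm

private lemma ite_ite_comm (P Q : Prop) [Decidable P] [Decidable Q] (x : ℝ) :
    (if P then (if Q then x else 0) else 0) = if Q then (if P then x else 0) else 0 := by
  split_ifs <;> rfl

private lemma conv_eq [Preorder β] (g h : β → β → ℝ) (a c : β) :
    conv g h a c = ∑ b, if a ≤ b ∧ b ≤ c then g a b * h b c else 0 := by
  rw [show conv g h a c = _ from finsum_cond _ _]
  exact Finset.sum_congr rfl fun b _ => by split_ifs <;> rfl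

private lemma conv_eq' [Preorder β] {g h : β → β → ℝ} (hg : memIA g) (hh : memIA h)
    (a c : β) : conv g h a c = ∑ b, g a b * h b c := by
  rw [conv_eq]
  refine Finset.sum_congr rfl fun b _ => ?_
  split_ifs with hb
  · rfl
  · rcases not_and_or.mp hb with hb | hb
    · rw [hg a b hb, zero_mul]
    · rw [hh b c hb, mul_zero]

private lemma pushf_eq (φ : β → γ) (h : β → β → ℝ) (q q' : γ) :
    pushf φ h q q' = (Nat.card {p : β // φ p = q'} : ℝ)⁻¹ *
      ∑ p, if φ p = q then (∑ p', if φ p' = q' then h p p' else 0) else 0 := by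
  unfold pushf
  congr 1
  rw [finsum_cond (fun p => φ p = q) (fun p => ∑ᶠ (p' : β) (_ : φ p' = q'), h p p')]
  refine Finset.sum_congr rfl fun p _ => ?_
  by_cases hp : φ p = q <;> simp [hp, finsum_cond]

private lemma fibcard (φ : β → γ) (q : γ) :
    (Nat.card {p : β // φ p = q} : ℝ) = ∑ p, if φ p = q then (1 : ℝ) else 0 := by
  rw [Finset.sum_boole, Nat.card_eq_fintype_card, Fintype.card_subtype]

private lemma sum_fib_const (φ : β → γ) (q : γ) (c : ℝ) :
    (∑ p, if φ p = q then c else 0) = (Nat.card {p : β // φ p = q} : ℝ) * c := by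
  rw [fibcard, Finset.sum_mul]
  exact Finset.sum_congr rfl fun p _ => by split_ifs <;> simp

private lemma fibcard_ne (φ : β → γ) {q : γ} (hq : ∃ p, φ p = q) :
    (Nat.card {p : β // φ p = q} : ℝ) ≠ 0 := by
  obtain ⟨p, hp⟩ := hq
  have : Nonempty {p : β // φ p = q} := ⟨⟨p, hp⟩⟩
  exact_mod_cast Nat.card_pos.ne'

private lemma swap_ite_sum (φ : β → γ) (f : β → β → ℝ) (q q' : γ) :
    (∑ p, if φ p = q then (∑ p', if φ p' = q' then f p p' else 0) else 0)
      = ∑ p', if φ p' = q' then (∑ p, if φ p = q then f p p' else 0) else 0 := by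
  simp_rw [ite_sum]
  rw [Finset.sum_comm]
  exact Finset.sum_congr rfl fun p' _ => Finset.sum_congr rfl fun p _ =>
    ite_ite_comm _ _ _

private lemma colsum_eq_pushf [Preorder β] (φ : β → γ) {g : β → β → ℝ}
    (hg : memIphi φ g) (q : γ) (b : β) :
    (∑ p, if φ p = q then g p b else 0) = pushf φ g q (φ b) := by
  rw [pushf_eq, swap_ite_sum]
  have hinv : ∀ p' : β, φ p' = φ b →
      (∑ p, if φ p = q then g p p' else 0) = ∑ p, if φ p = q then g p b else 0 := by
    intro p' hp'
    have := hg.2 q p' b hp'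
    rwa [finsum_cond, finsum_cond] at this
  have : (∑ p', if φ p' = φ b then (∑ p, if φ p = q then g p p' else 0) else 0)
      = ∑ p', if φ p' = φ b then (∑ p, if φ p = q then g p b else 0) else 0 := by
    refine Finset.sum_congr rfl fun p' _ => ?_
    split_ifs with h
    · exact hinv p' h
    · rfl
  rw [this, sum_fib_const, ← mul_assoc, inv_mul_cancel₀ (fibcard_ne φ ⟨b, rfl⟩), one_mul]

private lemma pushf_not_le [Preorder β] [Preorder γ] {φ : β → γ} (hmono : Monotone φ)
    {g : β → β → ℝ} (hg : memIA g) {q r : γ} (hqr : ¬ q ≤ r) : pushf φ g q r = 0 := by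
  rw [pushf_eq]
  rw [Finset.sum_eq_zero, mul_zero]
  intro p _
  split_ifs with h1
  · refine Finset.sum_eq_zero fun p' _ => ?_
    split_ifs with h2
    · exact hg p p' fun hle => hqr (h1 ▸ h2 ▸ hmono hle)
    · rfl
  · rfl

private lemma colsum_conv [Preorder β] [Preorder γ] (φ : β → γ) {g h : β → β → ℝ}
    (hg : memIphi φ g) (hh : memIphi φ h) (q : γ) (p0 : β) :
    (∑ p, if φ p = q then conv g h p p0 else 0)
      = ∑ r, pushf φ g q r * pushf φ h r (φ p0) := by
  have step1 : (∑ p, if φ p = q then conv g h p p0 else 0)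
      = ∑ b, (∑ p, if φ p = q then g p b else 0) * h b p0 := by
    simp_rw [conv_eq' hg.1 hh.1, ite_sum]
    rw [Finset.sum_comm]
    refine Finset.sum_congr rfl fun b _ => ?_
    rw [Finset.sum_mul]
    refine Finset.sum_congr rfl fun p _ => ?_
    split_ifs <;> simp
  rw [step1]
  have step2 : ∀ b : β, (∑ p, if φ p = q then g p b else 0) * h b p0
      = pushf φ g q (φ b) * h b p0 := fun b => by rw [colsum_eq_pushf φ hg]
  simp_rw [step2]
  -- regroup b by fibers of φ
  have step3 : (∑ b, pushf φ g q (φ b) * h b p0)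
      = ∑ r, ∑ b, if φ b = r then pushf φ g q r * h b p0 else 0 := by
    rw [Finset.sum_comm]
    refine Finset.sum_congr rfl fun b _ => ?_
    rw [Finset.sum_ite_eq Finset.univ (φ b) (fun r => pushf φ g q r * h b p0)]
    simp
  rw [step3]
  refine Finset.sum_congr rfl fun r _ => ?_
  have : (∑ b, if φ b = r then pushf φ g q r * h b p0 else 0)
      = pushf φ g q r * ∑ b, if φ b = r then h b p0 else 0 := by
    rw [Finset.mul_sum]
    refine Finset.sum_congr rfl fun b _ => ?_
    split_ifs <;> simp
  rw [this, colsum_eq_pushf φ hh]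

end Aux

/-- Proposition: `I_φ(𝒫)` is a subalgebra and `φ_*` is an algebra map.
For a surjective order-preserving map `φ : 𝒫 → 𝒬` of finite posets: `δ ∈ I_φ(𝒫)`,
`I_φ(𝒫)` is closed under convolution, `φ_*(g ∗ h) = φ_* g ∗ φ_* h` for `g, h ∈ I_φ(𝒫)`,
and `φ_* δ = δ`. -/
theorem statement10 {β γ : Type*} [Fintype β] [Fintype γ] [PartialOrder β] [PartialOrder γ]
    (φ : β → γ) (hsurj : Function.Surjective φ) (hmono : Monotone φ) :
    memIphi φ (deltaIA (β := β)) ∧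
    (∀ g h : β → β → ℝ, memIphi φ g → memIphi φ h → memIphi φ (conv g h)) ∧
    (∀ g h : β → β → ℝ, memIphi φ g → memIphi φ h →
      ∀ q q' : γ, pushf φ (conv g h) q q' = conv (pushf φ g) (pushf φ h) q q') ∧
    (∀ q q' : γ, pushf φ (deltaIA (β := β)) q q' = deltaIA q q') := by
  classical
  refine ⟨⟨?_, ?_⟩, ?_, ?_, ?_⟩
  · -- δ ∈ I(𝒫)
    intro a c hac
    unfold deltaIA
    rw [if_neg]
    rintro rfl; exact hac le_rfl
  · -- δ column-sum invariance
    intro q p₁ p₂ hp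
    rw [finsum_cond, finsum_cond]
    have key : ∀ p0 : β, (∑ p, if φ p = q then deltaIA p p0 else 0)
        = if φ p0 = q then (1 : ℝ) else 0 := by
      intro p0
      have h1 : ∀ p, (if φ p = q then deltaIA p p0 else 0)
          = if p = p0 then (if φ p0 = q then (1 : ℝ) else 0) else 0 := by
        intro p
        by_cases h2 : p = p0
        · subst h2; simp [deltaIA]
        · simp [deltaIA, h2]
      simp_rw [h1]
      rw [Finset.sum_ite_eq' Finset.univ p0]
      simp
    rw [key, key, hp]
  · -- closure under convolution
    intro g h hg hh
    refine ⟨?_, ?_⟩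
    · intro a c hac
      rw [conv_eq]
      refine Finset.sum_eq_zero fun b _ => ?_
      split_ifs with hb
      · exact absurd (hb.1.trans hb.2) hac
      · rfl
    · intro q p₁ p₂ hp
      rw [finsum_cond, finsum_cond, colsum_conv φ hg hh, colsum_conv φ hg hh, hp]
  · -- pushforward is multiplicative
    intro g h hg hh q q'
    have hNq' := fibcard_ne φ (hsurj q')
    rw [pushf_eq, swap_ite_sum]
    have hsum : (∑ p', if φ p' = q' then (∑ p, if φ p = q then conv g h p p' else 0) else 0)
        = ∑ p', if φ p' = q' then (∑ r, pushf φ g q r * pushf φ h r q') else 0 := by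
      refine Finset.sum_congr rfl fun p' _ => ?_
      split_ifs with h1
      · rw [colsum_conv φ hg hh, h1]
      · rfl
    rw [hsum, sum_fib_const, ← mul_assoc, inv_mul_cancel₀ hNq', one_mul,
      conv_eq' (fun a c hac => pushf_not_le hmono hg.1 hac)
        (fun a c hac => pushf_not_le hmono hh.1 hac)]
  · -- pushforward of δ is δ
    intro q q'
    rw [pushf_eq]
    have key : ∀ p : β, (∑ p', if φ p' = q' then deltaIA p p' else 0)
        = if φ p = q' then (1 : ℝ) else 0 := by
      intro p
      have h1 : ∀ p', (if φ p' = q' then deltaIA p p' else 0)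
          = if p' = p then (if φ p = q' then (1 : ℝ) else 0) else 0 := by
        intro p'
        by_cases h2 : p' = p
        · subst h2; simp [deltaIA]
        · have h3 : p ≠ p' := fun e => h2 e.symm
          simp [deltaIA, h2, h3]
      simp_rw [h1]
      rw [Finset.sum_ite_eq' Finset.univ p]
      simp
    simp_rw [key]
    by_cases hqq : q = q'
    · subst hqq
      have h2 : ∀ p : β, (if φ p = q then (if φ p = q then (1 : ℝ) else 0) else 0)
          = if φ p = q then (1 : ℝ) else 0 := fun p => by split_ifs <;> rfl
      simp_rw [h2]
      rw [← fibcard, inv_mul_cancel₀ (fibcard_ne φ (hsurj q))]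
      simp [deltaIA]
    · have h2 : ∀ p : β, (if φ p = q then (if φ p = q' then (1 : ℝ) else 0) else 0) = 0 := by
        intro p
        split_ifs with ha hb
        · exact absurd (ha.symm.trans hb) hqq
        · rfl
        · rfl
      simp_rw [h2]
      simp [deltaIA, hqq]

end GramAngles
end
end

section
/- Let α be a cone angle on ℝ^d, let P ⊂ ℝ^d be a d-dimensional polytope and let S ⊆ {1, …, d−1}. Then the exterior flag-angles satisfy α̌_S(P) = α̌_{S ∪ {0}}(P). -/
open scoped BigOperators InnerProductSpace Pointwise

noncomputable section

namespace GramAngles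

open Classical

variable {d : ℕ}

/-- The cone generated (with nonnegative coefficients) by a finite set. -/
def genBy (T : Finset (Euc d)) : Set (Euc d) :=
  {x | ∃ f : Euc d → ℝ, (∀ y ∈ T, 0 ≤ f y) ∧ x = ∑ y ∈ T, f y • y}

lemma zero_mem_genBy (T : Finset (Euc d)) : (0 : Euc d) ∈ genBy T :=
  ⟨0, fun _ _ => le_rfl, by simp⟩

lemma mem_genBy_self {T : Finset (Euc d)} {y : Euc d} (hy : y ∈ T) : y ∈ genBy T := by
  classical
  refine ⟨fun z => if z = y then 1 else 0, fun z _ => by positivity, ?_⟩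
  simp [ite_smul, Finset.sum_ite_eq', hy]

lemma genBy_add {T : Finset (Euc d)} {x y : Euc d} (hx : x ∈ genBy T) (hy : y ∈ genBy T) :
    x + y ∈ genBy T := by
  obtain ⟨f, hf, rfl⟩ := hx; obtain ⟨g, hg, rfl⟩ := hy
  refine ⟨f + g, fun z hz => add_nonneg (hf z hz) (hg z hz), ?_⟩
  rw [← Finset.sum_add_distrib]
  exact Finset.sum_congr rfl fun z _ => by simp [add_smul]

lemma genBy_smul {T : Finset (Euc d)} {c : ℝ} {x : Euc d} (hc : 0 ≤ c) (hx : x ∈ genBy T) :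
    c • x ∈ genBy T := by
  obtain ⟨f, hf, rfl⟩ := hx
  refine ⟨fun z => c * f z, fun z hz => mul_nonneg hc (hf z hz), ?_⟩
  rw [Finset.smul_sum]
  exact Finset.sum_congr rfl fun z _ => by rw [smul_smul]

lemma sum_mem_genBy {T : Finset (Euc d)} {ι : Type*} {s : Finset ι} {g : ι → Euc d}
    (h : ∀ i ∈ s, g i ∈ genBy T) : (∑ i ∈ s, g i) ∈ genBy T := by
  classical
  induction s using Finset.induction with
  | empty => simpa using zero_mem_genBy T
  | insert _ _ hx ih =>
    rw [Finset.sum_insert hx]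
    exact genBy_add (h _ (Finset.mem_insert_self _ _))
      (ih fun i hi => h i (Finset.mem_insert_of_mem hi))

lemma mem_genBy_mono {T₀ T : Finset (Euc d)} (hT : T₀ ⊆ T) {x : Euc d} (hx : x ∈ genBy T₀) :
    x ∈ genBy T := by
  obtain ⟨f, hf, rfl⟩ := hx
  refine ⟨fun u => if u ∈ T₀ then f u else 0, fun z _ => by dsimp only; split <;> simp_all [hf], ?_⟩
  rw [← Finset.sum_subset hT (fun y _ hy => by simp [hy])]
  exact Finset.sum_congr rfl fun z hz => by simp [hz]

/-- New generators after cutting by the halfspace `⟪a,·⟫ ≤ 0`. -/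
noncomputable def cutGens (T : Finset (Euc d)) (a : Euc d) : Finset (Euc d) :=
  T.filter (fun y => ⟪a, y⟫_ℝ ≤ 0) ∪
    (T ×ˢ T).image (fun p =>
      if 0 < ⟪a, p.1⟫_ℝ ∧ ⟪a, p.2⟫_ℝ < 0 then ⟪a, p.1⟫_ℝ • p.2 - ⟪a, p.2⟫_ℝ • p.1 else 0)

lemma cutGens_subset {T : Finset (Euc d)} {a : Euc d} {u : Euc d} (hu : u ∈ cutGens T a) :
    u ∈ genBy T ∧ ⟪a, u⟫_ℝ ≤ 0 := by
  rcases Finset.mem_union.1 hu with h | h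
  · rw [Finset.mem_filter] at h
    exact ⟨mem_genBy_self h.1, h.2⟩
  · obtain ⟨⟨y, z⟩, hyz, rfl⟩ := Finset.mem_image.1 h
    rw [Finset.mem_product] at hyz
    dsimp only
    split
    · rename_i hcond
      constructor
      · rw [sub_eq_add_neg, ← neg_smul]
        exact genBy_add (genBy_smul hcond.1.le (mem_genBy_self hyz.2))
          (genBy_smul (by linarith [hcond.2]) (mem_genBy_self hyz.1))
      · rw [inner_sub_right, real_inner_smul_right, real_inner_smul_right]
        ring_nf
        exact le_of_eq (by ring)
    · exact ⟨zero_mem_genBy T, by simp⟩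

lemma genBy_cutGens_subset (T : Finset (Euc d)) (a : Euc d) :
    genBy (cutGens T a) ⊆ genBy T ∩ {x | ⟪a, x⟫_ℝ ≤ 0} := by
  rintro x ⟨f, hf, rfl⟩
  constructor
  · exact sum_mem_genBy fun u hu => genBy_smul (hf u hu) (cutGens_subset hu).1
  · simp only [Set.mem_setOf_eq, inner_sum, real_inner_smul_right]
    exact Finset.sum_nonpos fun u hu =>
      mul_nonpos_iff.2 (Or.inl ⟨(hf u hu), (cutGens_subset hu).2⟩)

end GramAngles
namespace GramAngles

open Classical

variable {d : ℕ}

lemma cut_aux (T : Finset (Euc d)) (a : Euc d) :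
    ∀ (k : ℕ) (f : Euc d → ℝ),
      (T.filter (fun y => 0 < f y ∧ ⟪a, y⟫_ℝ ≠ 0)).card ≤ k →
      (∀ y ∈ T, 0 ≤ f y) → ⟪a, ∑ y ∈ T, f y • y⟫_ℝ ≤ 0 →
      (∑ y ∈ T, f y • y) ∈ genBy (cutGens T a) := by
  intro k
  induction k with
  | zero =>
    intro f hcard hf hax
    -- the filter is empty; in particular there is no positive-inner generator with positive weight
    have hemp : T.filter (fun y => 0 < f y ∧ ⟪a, y⟫_ℝ ≠ 0) = ∅ :=
      Finset.card_eq_zero.1 (Nat.le_zero.1 hcard)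
    have hbase : ∀ y ∈ T, 0 < f y → ⟪a, y⟫_ℝ ≤ 0 := by
      intro y hy hfy
      by_contra hpos
      have : y ∈ T.filter (fun y => 0 < f y ∧ ⟪a, y⟫_ℝ ≠ 0) :=
        Finset.mem_filter.2 ⟨hy, hfy, fun h => hpos (le_of_eq h)⟩
      exact absurd (hemp ▸ this) (Finset.notMem_empty y)
    -- x is a combination of generators with ⟪a,·⟫ ≤ 0
    have : (∑ y ∈ T, f y • y) = ∑ y ∈ T.filter (fun y => ⟪a, y⟫_ℝ ≤ 0), f y • y := by
      refine (Finset.sum_subset (Finset.filter_subset _ _) ?_).symm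
      intro y hy hny
      have : ¬ (0 < f y) := fun h => by
        simp only [Finset.mem_filter, hy, true_and] at hny
        exact hny (hbase y hy h)
      have : f y = 0 := le_antisymm (not_lt.1 this) (hf y hy)
      simp [this]
    rw [this]
    exact mem_genBy_mono Finset.subset_union_left
      ⟨f, fun y hy => hf y (Finset.mem_filter.1 hy).1, rfl⟩
  | succ k ih =>
    intro f hcard hf hax
    by_cases hyp : ∃ y ∈ T, 0 < f y ∧ 0 < ⟪a, y⟫_ℝ
    · obtain ⟨yp, hypT, hfp, hap⟩ := hyp
      -- there must be a generator with positive weight and negative inner product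
      have hyn : ∃ y ∈ T, 0 < f y ∧ ⟪a, y⟫_ℝ < 0 := by
        by_contra hno
        push_neg at hno
        have hterms : ∀ y ∈ T, 0 ≤ f y * ⟪a, y⟫_ℝ := by
          intro y hy
          rcases lt_or_eq_of_le (hf y hy) with h | h
          · exact mul_nonneg h.le (hno y hy h)
          · simp [← h]
        have hpos : 0 < ⟪a, ∑ y ∈ T, f y • y⟫_ℝ := by
          rw [inner_sum]
          simp_rw [real_inner_smul_right]
          exact Finset.sum_pos' hterms ⟨yp, hypT, mul_pos hfp hap⟩
        linarith
      obtain ⟨yn, hynT, hfn, han⟩ := hyn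
      set p : ℝ := ⟪a, yp⟫_ℝ with hp
      set q : ℝ := -⟪a, yn⟫_ℝ with hq
      have hq0 : 0 < q := by rw [hq]; linarith
      have hne : yn ≠ yp := fun h => by rw [h] at han; linarith
      set w : Euc d := p • yn + q • yp with hw
      have hwmem : w ∈ cutGens T a := by
        refine Finset.mem_union_right _ (Finset.mem_image.2 ⟨(yp, yn), ?_, ?_⟩)
        · exact Finset.mem_product.2 ⟨hypT, hynT⟩
        · rw [if_pos ⟨hap, han⟩, hw, sub_eq_add_neg, ← neg_smul, ← hp, ← hq]
      have haw : ⟪a, w⟫_ℝ = 0 := by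
        rw [hw, inner_add_right, real_inner_smul_right, real_inner_smul_right, hp, hq]
        ring
      set t : ℝ := min (f yp / q) (f yn / p) with ht
      have ht0 : 0 < t := lt_min (div_pos hfp hq0) (div_pos hfn hap)
      set δ : Euc d → ℝ := fun y => if y = yp then t * q else if y = yn then t * p else 0 with hδ
      set f' : Euc d → ℝ := fun y => f y - δ y with hf'
      have hδ0 : ∀ y, 0 ≤ δ y := by
        intro y
        rw [hδ]
        dsimp only
        split
        · positivity
        · split
          · positivity
          · exact le_rfl
      have hf'le : ∀ y, f' y ≤ f y := fun y => by
        rw [hf']; simp only [sub_le_self_iff]; exact hδ0 y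
      have hf'p : f' yp = f yp - t * q := by simp [hf', hδ]
      have hf'n : f' yn = f yn - t * p := by simp [hf', hδ, hne]
      have htq : t * q ≤ f yp := by
        have h1 : t ≤ f yp / q := min_le_left _ _
        calc t * q ≤ (f yp / q) * q := by nlinarith
        _ = f yp := div_mul_cancel₀ _ (ne_of_gt hq0)
      have htp : t * p ≤ f yn := by
        have h1 : t ≤ f yn / p := min_le_right _ _
        calc t * p ≤ (f yn / p) * p := by nlinarith
        _ = f yn := div_mul_cancel₀ _ (ne_of_gt hap)
      have hf'nonneg : ∀ y ∈ T, 0 ≤ f' y := by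
        intro y hy
        rcases eq_or_ne y yp with rfl | h1
        · rw [hf'p, sub_nonneg]; exact htq
        · rcases eq_or_ne y yn with rfl | h2
          · rw [hf'n, sub_nonneg]; exact htp
          · have hz : δ y = 0 := by rw [hδ]; dsimp only; rw [if_neg h1, if_neg h2]
            have : f' y = f y := by rw [hf']; dsimp only; rw [hz, sub_zero]
            rw [this]; exact hf y hy
      have hsplit : ∀ y, δ y • y
          = (if y = yp then (t * q) • y else 0) + (if y = yn then (t * p) • y else 0) := by
        intro y
        rw [hδ]
        dsimp only
        rcases eq_or_ne y yp with rfl | h1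
        · rw [if_pos rfl, if_pos rfl, if_neg (Ne.symm hne), add_zero]
        · rcases eq_or_ne y yn with rfl | h2
          · rw [if_neg h1, if_pos rfl, if_neg h1, if_pos rfl, zero_add]
          · rw [if_neg h1, if_neg h2, if_neg h1, if_neg h2, zero_smul, add_zero]
      have hδsum : ∑ y ∈ T, δ y • y = (t * q) • yp + (t * p) • yn := by
        rw [Finset.sum_congr rfl fun y _ => hsplit y, Finset.sum_add_distrib,
            Finset.sum_ite_eq' T yp (fun y => (t * q) • y),
            Finset.sum_ite_eq' T yn (fun y => (t * p) • y), if_pos hypT, if_pos hynT]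
      have hsum : ∑ y ∈ T, f' y • y = (∑ y ∈ T, f y • y) - t • w := by
        have h1 : ∑ y ∈ T, f' y • y = ∑ y ∈ T, (f y • y - δ y • y) :=
          Finset.sum_congr rfl fun y _ => by rw [hf']; dsimp only; rw [sub_smul]
        rw [h1, Finset.sum_sub_distrib, hδsum, hw, smul_add, smul_smul, smul_smul]
        abel
      have hax' : ⟪a, ∑ y ∈ T, f' y • y⟫_ℝ ≤ 0 := by
        rw [hsum, inner_sub_right, real_inner_smul_right, haw]
        simpa using hax
      -- the measure decreases
      have hssub : T.filter (fun y => 0 < f' y ∧ ⟪a, y⟫_ℝ ≠ 0)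
          ⊂ T.filter (fun y => 0 < f y ∧ ⟪a, y⟫_ℝ ≠ 0) := by
        constructor
        · intro y hy
          rw [Finset.mem_filter] at hy ⊢
          exact ⟨hy.1, lt_of_lt_of_le hy.2.1 (hf'le y), hy.2.2⟩
        · intro hsub
          -- one of yp, yn has f' = 0
          rcases min_cases (f yp / q) (f yn / p) with ⟨hmin, _⟩ | ⟨hmin, _⟩
          · have hzero : f' yp = 0 := by
              rw [hf'p, ht, hmin, div_mul_cancel₀ _ (ne_of_gt hq0), sub_self]
            have hmem : yp ∈ T.filter (fun y => 0 < f y ∧ ⟪a, y⟫_ℝ ≠ 0) :=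
              Finset.mem_filter.2 ⟨hypT, hfp, ne_of_gt hap⟩
            have := hsub hmem
            rw [Finset.mem_filter, hzero] at this
            exact lt_irrefl 0 this.2.1
          · have hzero : f' yn = 0 := by
              rw [hf'n, ht, hmin, div_mul_cancel₀ _ (ne_of_gt hap), sub_self]
            have hmem : yn ∈ T.filter (fun y => 0 < f y ∧ ⟪a, y⟫_ℝ ≠ 0) :=
              Finset.mem_filter.2 ⟨hynT, hfn, ne_of_lt han⟩
            have := hsub hmem
            rw [Finset.mem_filter, hzero] at this
            exact lt_irrefl 0 this.2.1
      have hcard' : (T.filter (fun y => 0 < f' y ∧ ⟪a, y⟫_ℝ ≠ 0)).card ≤ k := by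
        have := Finset.card_lt_card hssub
        omega
      have hrec := ih f' hcard' hf'nonneg hax'
      have : (∑ y ∈ T, f y • y) = (∑ y ∈ T, f' y • y) + t • w := by
        rw [hsum]; abel
      rw [this]
      exact genBy_add hrec (genBy_smul ht0.le (mem_genBy_self hwmem))
    · -- base argument again
      push_neg at hyp
      have : (∑ y ∈ T, f y • y) = ∑ y ∈ T.filter (fun y => ⟪a, y⟫_ℝ ≤ 0), f y • y := by
        refine (Finset.sum_subset (Finset.filter_subset _ _) ?_).symm
        intro y hy hny
        simp only [Finset.mem_filter, hy, true_and] at hny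
        have h0 : f y = 0 := by
          by_contra h
          exact hny (hyp y hy (lt_of_le_of_ne (hf y hy) (Ne.symm h)))
        simp [h0]
      rw [this]
      exact mem_genBy_mono Finset.subset_union_left
        ⟨f, fun y hy => hf y (Finset.mem_filter.1 hy).1, rfl⟩

/-- Cutting a finitely generated cone by a halfspace keeps it finitely generated. -/
lemma genBy_cut (T : Finset (Euc d)) (a : Euc d) :
    genBy (cutGens T a) = genBy T ∩ {x | ⟪a, x⟫_ℝ ≤ 0} := by
  refine Set.Subset.antisymm (genBy_cutGens_subset T a) ?_
  rintro x ⟨⟨f, hf, rfl⟩, hx⟩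
  exact cut_aux T a _ f le_rfl hf hx

end GramAngles
namespace GramAngles

open Classical

variable {d : ℕ}

lemma genBy_isPolyhedralCone (T : Finset (Euc d)) : IsPolyhedralCone (genBy T) := by
  classical
  refine ⟨T.card, fun i => (T.equivFin.symm i : Euc d), ?_⟩
  ext x
  constructor
  · rintro ⟨f, hf, rfl⟩
    refine ⟨fun i => f (T.equivFin.symm i : Euc d), fun i => hf _ (Finset.coe_mem _), ?_⟩
    rw [← Finset.sum_coe_sort T (fun y => f y • y)]
    exact Fintype.sum_equiv T.equivFin (fun a => f (a : Euc d) • (a : Euc d))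
      (fun i => f (T.equivFin.symm i : Euc d) • (T.equivFin.symm i : Euc d))
      (fun a => by simp)
  · rintro ⟨c, hc, rfl⟩
    refine ⟨fun y => ∑ i ∈ Finset.univ.filter (fun i => (T.equivFin.symm i : Euc d) = y), c i,
      fun y _ => Finset.sum_nonneg fun i _ => hc i, ?_⟩
    rw [← Finset.sum_fiberwise_of_maps_to (g := fun i => (T.equivFin.symm i : Euc d))
      (fun i _ => Finset.coe_mem _) (fun i => c i • (T.equivFin.symm i : Euc d))]
    refine Finset.sum_congr rfl fun y _ => ?_
    rw [Finset.sum_smul]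
    exact Finset.sum_congr rfl fun i hi => by
      rw [(Finset.mem_filter.1 hi).2]

lemma isPolyhedralCone_genBy {C : Set (Euc d)} (hC : IsPolyhedralCone C) :
    ∃ T : Finset (Euc d), C = genBy T := by
  classical
  obtain ⟨n, v, rfl⟩ := hC
  refine ⟨Finset.image v Finset.univ, ?_⟩
  ext x
  constructor
  · rintro ⟨c, hc, rfl⟩
    refine ⟨fun y => ∑ i ∈ Finset.univ.filter (fun i => v i = y), c i,
      fun y _ => Finset.sum_nonneg fun i _ => hc i, ?_⟩
    rw [← Finset.sum_fiberwise_of_maps_to (g := v)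
      (fun i _ => Finset.mem_image_of_mem v (Finset.mem_univ i)) (fun i => c i • v i)]
    refine Finset.sum_congr rfl fun y _ => ?_
    rw [Finset.sum_smul]
    exact Finset.sum_congr rfl fun i hi => by rw [(Finset.mem_filter.1 hi).2]
  · rintro ⟨f, hf, rfl⟩
    rcases Nat.eq_zero_or_pos n with rfl | hn
    · refine ⟨Fin.elim0, fun i => i.elim0, ?_⟩
      have : Finset.image v Finset.univ = ∅ := by simp
      simp [this]
    · have : Nonempty (Fin n) := ⟨⟨0, hn⟩⟩
      set g : Euc d → Fin n := fun y => if h : ∃ i, v i = y then h.choose else Classical.arbitrary _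
        with hg
      have hgv : ∀ y ∈ Finset.image v Finset.univ, v (g y) = y := by
        intro y hy
        obtain ⟨i, _, hi⟩ := Finset.mem_image.1 hy
        have h : ∃ i, v i = y := ⟨i, hi⟩
        rw [hg]
        dsimp only
        rw [dif_pos h]
        exact h.choose_spec
      refine ⟨fun i => if g (v i) = i then f (v i) else 0, fun i => ?_, ?_⟩
      · dsimp only
        split
        · exact hf (v i) (Finset.mem_image_of_mem v (Finset.mem_univ i))
        · exact le_rfl
      · have h1 : ∀ i : Fin n, (if g (v i) = i then f (v i) else 0) • v i
            = if g (v i) = i then f (v i) • v i else 0 := fun i => by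
          split <;> simp
        rw [Finset.sum_congr rfl fun i _ => h1 i, ← Finset.sum_filter]
        refine (Finset.sum_bij (fun (i : Fin n) (_ : i ∈ Finset.univ.filter
          (fun i => g (v i) = i)) => v i) ?_ ?_ ?_ ?_).symm
        · intro i hi
          exact Finset.mem_image_of_mem v (Finset.mem_univ i)
        · intro i hi j hj hij
          have hij' : v i = v j := hij
          rw [Finset.mem_filter] at hi hj
          rw [← hi.2, ← hj.2, hij']
        · intro y hy
          refine ⟨g y, Finset.mem_filter.2 ⟨Finset.mem_univ _, ?_⟩, (hgv y hy)⟩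
          rw [hgv y hy]
        · intro i hi
          rfl

/-- `ℝ^d` is a polyhedral cone. -/
lemma isPolyhedralCone_univ : IsPolyhedralCone (Set.univ : Set (Euc d)) := by
  classical
  refine ⟨d + d, Fin.addCases (fun j => EuclideanSpace.single j (1:ℝ))
    (fun j => -EuclideanSpace.single j (1:ℝ)), ?_⟩
  ext x
  simp only [Set.mem_univ, true_iff, Set.mem_setOf_eq]
  refine ⟨Fin.addCases (fun j => max (x j) 0) (fun j => max (-(x j)) 0), ?_, ?_⟩
  · intro i
    induction i using Fin.addCases with
    | left j => dsimp only; rw [Fin.addCases_left]; exact le_max_right _ _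
    | right j => dsimp only; rw [Fin.addCases_right]; exact le_max_right _ _
  · rw [Fin.sum_univ_add]
    simp only [Fin.addCases_left, Fin.addCases_right]
    have h2 : ∀ j : Fin d, max (x j) 0 • EuclideanSpace.single j (1:ℝ)
        + max (-(x j)) 0 • (-EuclideanSpace.single j (1:ℝ)) = x j • EuclideanSpace.single j (1:ℝ) := by
      intro j
      rw [smul_neg, ← sub_eq_add_neg, ← sub_smul]
      congr 1
      exact max_zero_sub_max_neg_zero_eq_self (x j)
    rw [← Finset.sum_add_distrib, Finset.sum_congr rfl fun j _ => h2 j]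
    have hb := (EuclideanSpace.basisFun (Fin d) ℝ).sum_repr x
    simp only [EuclideanSpace.basisFun_repr, EuclideanSpace.basisFun_apply] at hb
    exact hb.symm

/-- `genBy` form of `ℝ^d`. -/
lemma univ_genBy : ∃ T : Finset (Euc d), (Set.univ : Set (Euc d)) = genBy T :=
  isPolyhedralCone_genBy isPolyhedralCone_univ

end GramAngles
namespace GramAngles

open Classical

variable {d : ℕ}

lemma sdim_lt_of_subset_ker {C : Set (Euc d)} {a : Euc d} (ha : a ≠ 0)
    (hC : C ⊆ {x | ⟪a, x⟫_ℝ = 0}) : sdim C < d := by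
  classical
  set K : Submodule ℝ (Euc d) := (ℝ ∙ a)ᗮ with hK
  have hCK : C ⊆ (K : Set (Euc d)) := by
    intro x hx
    have : ⟪a, x⟫_ℝ = 0 := hC hx
    rw [hK, SetLike.mem_coe, Submodule.mem_orthogonal_singleton_iff_inner_right]
    exact this
  have hvs : vectorSpan ℝ C ≤ K := by
    rw [vectorSpan_def, Submodule.span_le]
    rintro z hz
    obtain ⟨x, hx, y, hy, rfl⟩ := Set.mem_sub.1 hz
    exact Submodule.sub_mem K (hCK hx) (hCK hy)
  have h1 : sdim C ≤ Module.finrank ℝ K := Submodule.finrank_mono hvs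
  have h2 : Module.finrank ℝ K < d := by
    have hne : K < ⊤ := by
      refine lt_top_iff_ne_top.2 fun h => ha ?_
      have haK : a ∈ K := h ▸ Submodule.mem_top
      rw [hK, Submodule.mem_orthogonal_singleton_iff_inner_right] at haK
      exact inner_self_eq_zero.1 haK
    have := Submodule.finrank_lt hne.ne
    rwa [finrank_euclideanSpace_fin] at this
  omega

/-- Cutting additivity for a cone angle. -/
lemma alpha_cut (α : ConeAngle d) (T : Finset (Euc d)) {a : Euc d} (ha : a ≠ 0) :
    α.toFun (genBy T) = α.toFun (genBy T ∩ {x | ⟪a, x⟫_ℝ ≤ 0})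
      + α.toFun (genBy T ∩ {x | 0 ≤ ⟪a, x⟫_ℝ}) := by
  have hms : {x : Euc d | 0 ≤ ⟪a, x⟫_ℝ} = {x | ⟪-a, x⟫_ℝ ≤ 0} := by
    ext x; simp [inner_neg_left]
  have hm : genBy T ∩ {x | ⟪a, x⟫_ℝ ≤ 0} = genBy (cutGens T a) := (genBy_cut T a).symm
  have hp : genBy T ∩ {x | 0 ≤ ⟪a, x⟫_ℝ} = genBy (cutGens T (-a)) := by
    rw [hms]; exact (genBy_cut T (-a)).symm
  have hsubm : genBy (cutGens T a) ⊆ genBy T := by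
    rw [genBy_cut]; exact Set.inter_subset_left
  have hip : genBy T ∩ {x | ⟪a, x⟫_ℝ ≤ 0} ∩ (genBy T ∩ {x | 0 ≤ ⟪a, x⟫_ℝ})
      = genBy (cutGens (cutGens T a) (-a)) := by
    rw [genBy_cut, hm]
    ext x
    constructor
    · rintro ⟨h1, _, h2⟩
      exact ⟨h1, by simpa [inner_neg_left] using h2⟩
    · rintro ⟨h1, h2⟩
      exact ⟨h1, hsubm h1, by simpa [inner_neg_left] using h2⟩
  have hu : genBy T ∩ {x | ⟪a, x⟫_ℝ ≤ 0} ∪ (genBy T ∩ {x | 0 ≤ ⟪a, x⟫_ℝ}) = genBy T := by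
    rw [← Set.inter_union_distrib_left]
    refine Set.inter_eq_self_of_subset_left fun x _ => ?_
    rcases le_total (⟪a, x⟫_ℝ) 0 with h | h
    · exact Or.inl h
    · exact Or.inr h
  have hthin : α.toFun (genBy (cutGens (cutGens T a) (-a))) = 0 := by
    refine α.simple' _ (genBy_isPolyhedralCone _) (sdim_lt_of_subset_ker ha ?_)
    rw [genBy_cut, genBy_cut]
    rintro x ⟨⟨_, h1⟩, h2⟩
    simp only [Set.mem_setOf_eq, inner_neg_left, neg_nonpos] at h2
    simp only [Set.mem_setOf_eq] at h1 ⊢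
    exact le_antisymm h1 h2
  have hU := α.union' (genBy T ∩ {x | ⟪a, x⟫_ℝ ≤ 0}) (genBy T ∩ {x | 0 ≤ ⟪a, x⟫_ℝ})
    (by rw [hm]; exact genBy_isPolyhedralCone _)
    (by rw [hp]; exact genBy_isPolyhedralCone _)
    (by rw [hu]; exact genBy_isPolyhedralCone T)
    (by rw [hip]; exact genBy_isPolyhedralCone _)
  rw [hu, hip, hthin, sub_zero] at hU
  exact hU

/-- The cells of the hyperplane arrangement with normals in `L`. -/
def cells : List (Euc d) → List (Set (Euc d))
  | [] => [Set.univ]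
  | a :: L => (cells L).flatMap (fun K => [K ∩ {x | ⟪a, x⟫_ℝ ≤ 0}, K ∩ {x | 0 ≤ ⟪a, x⟫_ℝ}])

lemma cells_inter_FG {L : List (Euc d)} {K : Set (Euc d)} (hK : K ∈ cells L)
    {C : Set (Euc d)} (hC : ∃ T, C = genBy T) : ∃ T', C ∩ K = genBy T' := by
  induction L generalizing K with
  | nil =>
    simp only [cells, List.mem_singleton] at hK
    subst hK
    obtain ⟨T, rfl⟩ := hC
    exact ⟨T, by simp⟩
  | cons a L ih =>
    simp only [cells, List.mem_flatMap] at hK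
    obtain ⟨K₀, hK₀, hmem⟩ := hK
    obtain ⟨T₀, hT₀⟩ := ih hK₀
    simp only [List.mem_cons, List.not_mem_nil, or_false] at hmem
    rcases hmem with rfl | rfl
    · exact ⟨cutGens T₀ a, by rw [← Set.inter_assoc, hT₀, ← genBy_cut]⟩
    · refine ⟨cutGens T₀ (-a), ?_⟩
      have hms : {x : Euc d | 0 ≤ ⟪a, x⟫_ℝ} = {x | ⟪-a, x⟫_ℝ ≤ 0} := by
        ext x; simp [inner_neg_left]
      rw [← Set.inter_assoc, hT₀, hms, ← genBy_cut]

lemma cells_sides {L : List (Euc d)} {K : Set (Euc d)} (hK : K ∈ cells L) :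
    ∀ a ∈ L, K ⊆ {x | ⟪a, x⟫_ℝ ≤ 0} ∨ K ⊆ {x | 0 ≤ ⟪a, x⟫_ℝ} := by
  induction L generalizing K with
  | nil => intro a ha; exact absurd ha List.not_mem_nil
  | cons b L ih =>
    simp only [cells, List.mem_flatMap] at hK
    obtain ⟨K₀, hK₀, hmem⟩ := hK
    simp only [List.mem_cons, List.not_mem_nil, or_false] at hmem
    intro a ha
    rcases List.mem_cons.1 ha with rfl | haL
    · rcases hmem with rfl | rfl
      · exact Or.inl Set.inter_subset_right
      · exact Or.inr Set.inter_subset_right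
    · have hsub : K ⊆ K₀ := by
        rcases hmem with rfl | rfl
        · exact Set.inter_subset_left
        · exact Set.inter_subset_left
      rcases ih hK₀ a haL with h | h
      · exact Or.inl (hsub.trans h)
      · exact Or.inr (hsub.trans h)

lemma bind_pair_sum (g : Set (Euc d) → ℝ) (A B : Set (Euc d)) (M : List (Set (Euc d))) :
    ((M.flatMap (fun K => [K ∩ A, K ∩ B])).map g).sum
      = (M.map (fun K => g (K ∩ A) + g (K ∩ B))).sum := by
  induction M with
  | nil => simp
  | cons K M ih => simp [ih, add_assoc]

lemma alpha_cells (α : ConeAngle d) {L : List (Euc d)} (hL : ∀ a ∈ L, a ≠ 0)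
    {C : Set (Euc d)} (hC : ∃ T, C = genBy T) :
    α.toFun C = ((cells L).map (fun K => α.toFun (C ∩ K))).sum := by
  induction L with
  | nil => simp [cells]
  | cons a L ih =>
    rw [ih (fun b hb => hL b (List.mem_cons_of_mem a hb)), cells, bind_pair_sum]
    refine congrArg _ (List.map_congr_left fun K hK => ?_)
    obtain ⟨T', hT'⟩ := cells_inter_FG hK hC
    rw [← Set.inter_assoc, ← Set.inter_assoc, hT', alpha_cut α T' (hL a List.mem_cons_self)]

end GramAngles
namespace GramAngles

open Classical

variable {d : ℕ}

/-- The normal cone at `v` of the finite point set `V`. -/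
def NvS (V : Finset (Euc d)) (v : Euc d) : Set (Euc d) :=
  {c | ∀ y ∈ V, ⟪c, y⟫_ℝ ≤ ⟪c, v⟫_ℝ}

lemma NvS_halfspace (V : Finset (Euc d)) (v : Euc d) :
    NvS V v = ⋂ y ∈ V, {c : Euc d | ⟪y - v, c⟫_ℝ ≤ 0} := by
  ext c
  simp only [NvS, Set.mem_setOf_eq, Set.mem_iInter]
  refine forall₂_congr fun y _ => ?_
  rw [inner_sub_left, sub_nonpos, real_inner_comm y c, real_inner_comm v c]

lemma FG_inter_NvS {C : Set (Euc d)} (hC : ∃ T, C = genBy T) (V : Finset (Euc d)) (v : Euc d) :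
    ∃ T', C ∩ NvS V v = genBy T' := by
  classical
  rw [NvS_halfspace]
  induction V using Finset.induction with
  | empty => simpa using hC
  | insert _ _ hx ih =>
    rename_i y V
    obtain ⟨T₀, hT₀⟩ := ih
    refine ⟨cutGens T₀ (y - v), ?_⟩
    rw [genBy_cut, ← hT₀, Finset.set_biInter_insert, Set.inter_comm ({c : Euc d | ⟪y - v, c⟫_ℝ ≤ 0}),
      Set.inter_assoc]

lemma sum_list_swap {ι : Type*} (V : Finset ι) (M : List (Set (Euc d)))
    (g : ι → Set (Euc d) → ℝ) :
    ∑ v ∈ V, (M.map (g v)).sum = (M.map (fun K => ∑ v ∈ V, g v K)).sum := by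
  induction M with
  | nil => simp
  | cons K M ih => simp [Finset.sum_add_distrib, ih]

lemma exists_strict (T : Finset (Euc d)) (L : List (Euc d))
    (hsides : ∀ a ∈ L, genBy T ⊆ {x | ⟪a, x⟫_ℝ ≤ 0} ∨ genBy T ⊆ {x | 0 ≤ ⟪a, x⟫_ℝ})
    (hnot : ∀ a ∈ L, ∃ c ∈ genBy T, ⟪a, c⟫_ℝ ≠ 0) :
    ∃ c ∈ genBy T, ∀ a ∈ L, ⟪a, c⟫_ℝ ≠ 0 := by
  induction L with
  | nil => exact ⟨0, zero_mem_genBy T, fun a ha => absurd ha List.not_mem_nil⟩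
  | cons a L ih =>
    obtain ⟨c', hc', hc'p⟩ := ih (fun b hb => hsides b (List.mem_cons_of_mem a hb))
      (fun b hb => hnot b (List.mem_cons_of_mem a hb))
    obtain ⟨ca, hca, hcap⟩ := hnot a List.mem_cons_self
    refine ⟨c' + ca, genBy_add hc' hca, fun b hb => ?_⟩
    have hside := hsides b hb
    rcases List.mem_cons.1 hb with rfl | hbL
    · rcases hside with h | h
      · have h1 : ⟪b, c'⟫_ℝ ≤ 0 := h hc'
        have h2 : ⟪b, ca⟫_ℝ < 0 := lt_of_le_of_ne (h hca) hcap
        rw [inner_add_right]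
        linarith
      · have h1 : 0 ≤ ⟪b, c'⟫_ℝ := h hc'
        have h2 : 0 < ⟪b, ca⟫_ℝ := lt_of_le_of_ne (h hca) (Ne.symm hcap)
        rw [inner_add_right]
        linarith
    · have hc'b : ⟪b, c'⟫_ℝ ≠ 0 := hc'p b hbL
      rcases hside with h | h
      · have h1 : ⟪b, c'⟫_ℝ < 0 := lt_of_le_of_ne (h hc') hc'b
        have h2 : ⟪b, ca⟫_ℝ ≤ 0 := h hca
        rw [inner_add_right]
        linarith
      · have h1 : 0 < ⟪b, c'⟫_ℝ := lt_of_le_of_ne (h hc') (Ne.symm hc'b)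
        have h2 : 0 ≤ ⟪b, ca⟫_ℝ := h hca
        rw [inner_add_right]
        linarith

/-- Key covering lemma: the angles of the normal cones at the points of a finite set sum to 1. -/
lemma key_core (α : ConeAngle d) (V : Finset (Euc d)) (hV : V.Nonempty) :
    ∑ v ∈ V, α.toFun (NvS V v) = 1 := by
  classical
  set L : List (Euc d) :=
    (((V ×ˢ V).filter (fun p => p.1 ≠ p.2)).toList).map (fun p => p.1 - p.2) with hL
  have hLne : ∀ a ∈ L, a ≠ 0 := by
    intro a ha
    rw [hL] at ha
    obtain ⟨p, hp, rfl⟩ := List.mem_map.1 ha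
    rw [Finset.mem_toList, Finset.mem_filter] at hp
    exact sub_ne_zero.2 hp.2
  have hLmem : ∀ u ∈ V, ∀ v ∈ V, u ≠ v → u - v ∈ L := by
    intro u hu v hv huv
    rw [hL]
    exact List.mem_map.2 ⟨(u, v), Finset.mem_toList.2 (Finset.mem_filter.2
      ⟨Finset.mk_mem_product hu hv, huv⟩), rfl⟩
  -- per-cell computation
  have per_cell : ∀ K ∈ cells L, ∑ v ∈ V, α.toFun (NvS V v ∩ K) = α.toFun K := by
    intro K hK
    have hKFG : ∃ T, K = genBy T := by
      obtain ⟨T, hT⟩ := cells_inter_FG (C := Set.univ) hK univ_genBy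
      exact ⟨T, by rw [← hT, Set.univ_inter]⟩
    obtain ⟨TK, hTK⟩ := hKFG
    by_cases hbad : ∃ a ∈ L, K ⊆ {x | ⟪a, x⟫_ℝ = 0}
    · obtain ⟨a, haL, hsub⟩ := hbad
      have hKzero : α.toFun K = 0 := by
        rw [hTK]
        exact α.simple' _ (genBy_isPolyhedralCone _)
          (sdim_lt_of_subset_ker (hLne a haL) (hTK ▸ hsub))
      rw [hKzero]
      refine Finset.sum_eq_zero fun v hv => ?_
      obtain ⟨T', hT'⟩ := FG_inter_NvS (C := K) ⟨TK, hTK⟩ V v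
      rw [Set.inter_comm] at hT'
      rw [hT']
      exact α.simple' _ (genBy_isPolyhedralCone _)
        (sdim_lt_of_subset_ker (hLne a haL)
          (hT' ▸ (Set.inter_subset_right.trans hsub : NvS V v ∩ K ⊆ _)))
    · push_neg at hbad
      -- a point of K with all inner products nonzero
      have hnot : ∀ a ∈ L, ∃ c ∈ genBy TK, ⟪a, c⟫_ℝ ≠ 0 := by
        intro a ha
        obtain ⟨c, hc, hcne⟩ := Set.not_subset.1 (hbad a ha)
        exact ⟨c, hTK ▸ hc, hcne⟩
      have hsides : ∀ a ∈ L, genBy TK ⊆ {x | ⟪a, x⟫_ℝ ≤ 0} ∨ genBy TK ⊆ {x | 0 ≤ ⟪a, x⟫_ℝ} := by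
        intro a ha
        rcases cells_sides hK a ha with h | h
        · exact Or.inl (hTK ▸ h)
        · exact Or.inr (hTK ▸ h)
      obtain ⟨cs, hcs, hcsp⟩ := exists_strict TK L hsides hnot
      have hcsK : cs ∈ K := hTK ▸ hcs
      obtain ⟨vs, hvs, hmax⟩ := V.exists_max_image (fun y => ⟪cs, y⟫_ℝ) hV
      -- K is contained in the normal cone at vs
      have hKN : K ⊆ NvS V vs := by
        intro c hc y hy
        rcases eq_or_ne y vs with rfl | hne
        · exact le_rfl
        · have haL : y - vs ∈ L := hLmem y hy vs hvs hne
          have hlt : ⟪y - vs, cs⟫_ℝ < 0 := by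
            refine lt_of_le_of_ne ?_ (hcsp _ haL)
            rw [inner_sub_left, sub_nonpos]
            linarith [hmax y hy, real_inner_comm cs y, real_inner_comm cs vs]
          have hside : K ⊆ {x | ⟪y - vs, x⟫_ℝ ≤ 0} := by
            rcases cells_sides hK _ haL with h | h
            · exact h
            · exact absurd (h hcsK) (by simpa using not_le.2 hlt)
          have h3 := hside hc
          rw [Set.mem_setOf_eq, inner_sub_left, sub_nonpos] at h3
          linarith [real_inner_comm c y, real_inner_comm c vs]
      rw [Finset.sum_eq_single_of_mem vs hvs]
      · rw [Set.inter_eq_self_of_subset_right hKN]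
      · intro u hu hne
        -- the normal cone at u meets K in a thin set
        have hsub : NvS V u ∩ K ⊆ {x | ⟪u - vs, x⟫_ℝ = 0} := by
          rintro c ⟨hcN, hcK⟩
          have h1 : ⟪c, vs⟫_ℝ ≤ ⟪c, u⟫_ℝ := hcN vs hvs
          have h2 : ⟪c, u⟫_ℝ ≤ ⟪c, vs⟫_ℝ := hKN hcK u hu
          rw [Set.mem_setOf_eq, inner_sub_left]
          linarith [real_inner_comm c u, real_inner_comm c vs]
        obtain ⟨T', hT'⟩ := FG_inter_NvS (C := K) ⟨TK, hTK⟩ V u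
        rw [Set.inter_comm] at hT'
        rw [hT']
        exact α.simple' _ (genBy_isPolyhedralCone _)
          (sdim_lt_of_subset_ker (sub_ne_zero.2 hne) (hT' ▸ hsub))
  -- assemble
  have h1 : (1 : ℝ) = ((cells L).map (fun K => α.toFun K)).sum := by
    have := alpha_cells α hLne (C := Set.univ) univ_genBy
    rw [α.norm'] at this
    rw [this]
    exact congrArg _ (List.map_congr_left fun K _ => by rw [Set.univ_inter])
  have h2 : ∀ v ∈ V, α.toFun (NvS V v) = ((cells L).map (fun K => α.toFun (NvS V v ∩ K))).sum := by
    intro v hv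
    have hFG : ∃ T, NvS V v = genBy T := by
      obtain ⟨T, hT⟩ := FG_inter_NvS (C := Set.univ) univ_genBy V v
      exact ⟨T, by rw [← hT, Set.univ_inter]⟩
    exact alpha_cells α hLne hFG
  calc ∑ v ∈ V, α.toFun (NvS V v)
      = ∑ v ∈ V, ((cells L).map (fun K => α.toFun (NvS V v ∩ K))).sum :=
        Finset.sum_congr rfl h2
    _ = ((cells L).map (fun K => ∑ v ∈ V, α.toFun (NvS V v ∩ K))).sum :=
        sum_list_swap V (cells L) (fun v K => α.toFun (NvS V v ∩ K))
    _ = ((cells L).map (fun K => α.toFun K)).sum :=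
        congrArg _ (List.map_congr_left per_cell)
    _ = 1 := h1.symm

end GramAngles
namespace GramAngles

open Classical

variable {d : ℕ}

lemma clm_le_on_convexHull {s : Set (Euc d)} {l : Euc d →L[ℝ] ℝ} {M : ℝ}
    (h : ∀ y ∈ s, l y ≤ M) {x : Euc d} (hx : x ∈ convexHull ℝ s) : l x ≤ M :=
  convexHull_min h (convex_halfSpace_le ⟨fun a b => l.map_add a b, fun c y => l.map_smul c y⟩ M) hx

lemma inner_le_on_convexHull {s : Set (Euc d)} {c : Euc d} {M : ℝ}
    (h : ∀ y ∈ s, ⟪c, y⟫_ℝ ≤ M) {x : Euc d} (hx : x ∈ convexHull ℝ s) : ⟪c, x⟫_ℝ ≤ M :=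
  convexHull_min h (convex_halfSpace_le
    ⟨fun a b => inner_add_right c a b, fun t a => real_inner_smul_right c a t⟩ M) hx

/-- Every nonempty face of a polytope is the hull of the original points lying on it. -/
lemma face_structure {s : Finset (Euc d)} (hs : s.Nonempty) {F : Set (Euc d)}
    (hF : IsFace (convexHull ℝ (s : Set (Euc d))) F) (hFne : F.Nonempty) :
    ∃ t : Finset (Euc d), t ⊆ s ∧ t.Nonempty ∧ F = convexHull ℝ (t : Set (Euc d)) ∧
      t = s.filter (fun y => y ∈ F) := by
  classical
  obtain ⟨l, hl⟩ := hF hFne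
  obtain ⟨z, hzs, hzmax⟩ := s.exists_max_image l hs
  set P := convexHull ℝ (s : Set (Euc d)) with hP
  set M := l z with hM
  have hPle : ∀ x ∈ P, l x ≤ M := fun x hx => clm_le_on_convexHull (fun y hy => hzmax y hy) hx
  have hzP : z ∈ P := subset_convexHull ℝ _ hzs
  have hFeq : F = P ∩ {x | l x = M} := by
    rw [hl]
    ext x
    constructor
    · rintro ⟨hxP, hxmax⟩
      exact ⟨hxP, le_antisymm (hPle x hxP) (hxmax z hzP)⟩
    · rintro ⟨hxP, hxM⟩
      exact ⟨hxP, fun y hy => (hPle y hy).trans hxM.ge⟩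
  set t := s.filter (fun y => l y = M) with ht
  have htz : z ∈ t := Finset.mem_filter.2 ⟨hzs, rfl⟩
  have htmem : ∀ y ∈ t, y ∈ P ∩ {x | l x = M} := by
    intro y hy
    rw [ht, Finset.mem_filter] at hy
    exact ⟨subset_convexHull ℝ _ hy.1, hy.2⟩
  have hFt : F = convexHull ℝ (t : Set (Euc d)) := by
    rw [hFeq]
    apply Set.Subset.antisymm
    · rintro x ⟨hxP, hxM⟩
      rw [hP, Finset.convexHull_eq] at hxP
      obtain ⟨w, hw0, hw1, hwx⟩ := hxP
      rw [Finset.centerMass_eq_of_sum_1 _ _ hw1] at hwx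
      simp only [id_eq] at hwx
      have hlx : ∑ y ∈ s, w y * l y = M := by
        have h1 : l x = ∑ y ∈ s, w y * l y := by
          rw [← hwx, map_sum]
          exact Finset.sum_congr rfl fun y _ => by rw [map_smul, smul_eq_mul]
        rw [← h1]
        exact hxM
      have hzero : ∀ y ∈ s, w y * (M - l y) = 0 := by
        have hsum : ∑ y ∈ s, w y * (M - l y) = 0 := by
          have h2 : ∑ y ∈ s, w y * M = M := by rw [← Finset.sum_mul, hw1, one_mul]
          have h3 : ∀ y ∈ s, w y * (M - l y) = w y * M - w y * l y :=
            fun y _ => by ring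
          rw [Finset.sum_congr rfl h3, Finset.sum_sub_distrib, h2, hlx, sub_self]
        intro y hy
        refine (Finset.sum_eq_zero_iff_of_nonneg fun u hu => ?_).1 hsum y hy
        exact mul_nonneg (hw0 u hu) (sub_nonneg.2 (hzmax u hu))
      have hvanish : ∀ y ∈ s, y ∉ t → w y = 0 := by
        intro y hy hyt
        have hne : l y ≠ M := fun h => hyt (Finset.mem_filter.2 ⟨hy, h⟩)
        rcases mul_eq_zero.1 (hzero y hy) with h | h
        · exact h
        · exact absurd (by linarith [sub_eq_zero.1 h] : l y = M) hne
      rw [Finset.convexHull_eq]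
      refine ⟨w, fun y hy => hw0 y (Finset.filter_subset _ _ hy), ?_, ?_⟩
      · exact (Finset.sum_subset (Finset.filter_subset _ _) hvanish).trans hw1
      · rw [Finset.centerMass_eq_of_sum_1 _ _
          ((Finset.sum_subset (Finset.filter_subset _ _) hvanish).trans hw1)]
        simp only [id_eq]
        rw [← hwx]
        exact Finset.sum_subset (Finset.filter_subset _ _)
          (fun y hy hyt => by rw [hvanish y hy hyt, zero_smul])
    · exact convexHull_min htmem
        ((convex_convexHull ℝ _).inter (convex_hyperplane
          ⟨fun a b => l.map_add a b, fun c y => l.map_smul c y⟩ M))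
  refine ⟨t, Finset.filter_subset _ _, ⟨z, htz⟩, hFt, ?_⟩
  ext y
  rw [ht, Finset.mem_filter, Finset.mem_filter]
  constructor
  · rintro ⟨hy, hyM⟩
    exact ⟨hy, hFeq ▸ ⟨subset_convexHull ℝ _ hy, hyM⟩⟩
  · rintro ⟨hy, hyF⟩
    have := hFeq ▸ hyF
    exact ⟨hy, this.2⟩

/-- Minkowski's theorem for polytopes. -/
lemma conv_extremePoints (s : Finset (Euc d)) :
    convexHull ℝ (s : Set (Euc d)) =
      convexHull ℝ ((convexHull ℝ (s : Set (Euc d))).extremePoints ℝ) := by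
  have hcomp : IsCompact (convexHull ℝ (s : Set (Euc d))) := s.finite_toSet.isCompact_convexHull ℝ
  have hKM := closure_convexHull_extremePoints hcomp (convex_convexHull ℝ _)
  have hfin : ((convexHull ℝ (s : Set (Euc d))).extremePoints ℝ).Finite :=
    s.finite_toSet.subset extremePoints_convexHull_subset
  conv_lhs => rw [← hKM]
  exact ((hfin.isCompact_convexHull ℝ).isClosed).closure_eq

/-- An extreme point of a polytope is not in the hull of the other generators. -/
lemma extreme_not_mem_erase {s : Finset (Euc d)} {v : Euc d}
    (hext : v ∈ (convexHull ℝ (s : Set (Euc d))).extremePoints ℝ) :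
    v ∉ convexHull ℝ ((s.erase v : Finset (Euc d)) : Set (Euc d)) := by
  intro hmem
  have h1 := ((convex_convexHull ℝ (s : Set (Euc d))).mem_extremePoints_iff_mem_diff_convexHull_diff).1 hext
  refine h1.2 (convexHull_mono ?_ hmem)
  intro y hy
  have hy' : y ∈ s.erase v := by exact_mod_cast hy
  exact ⟨subset_convexHull ℝ _ (Finset.coe_subset.2 (Finset.erase_subset _ _) hy),
    (Finset.mem_erase.1 hy').1⟩

/-- Dichotomy: a generator is either an exposed point or redundant. -/
lemma exposed_or_mem_erase {s : Finset (Euc d)} {v : Euc d} (hv : v ∈ s) :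
    IsExposed ℝ (convexHull ℝ (s : Set (Euc d))) {v} ∨
      v ∈ convexHull ℝ ((s.erase v : Finset (Euc d)) : Set (Euc d)) := by
  classical
  by_cases hmem : v ∈ convexHull ℝ ((s.erase v : Finset (Euc d)) : Set (Euc d))
  · exact Or.inr hmem
  left
  have hclosed : IsClosed (convexHull ℝ ((s.erase v : Finset (Euc d)) : Set (Euc d))) :=
    ((s.erase v).finite_toSet.isCompact_convexHull ℝ).isClosed
  obtain ⟨f, u, hfu, huv⟩ := geometric_hahn_banach_closed_point
    (convex_convexHull ℝ _) hclosed hmem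
  intro _
  refine ⟨f, ?_⟩
  have hmax : ∀ y ∈ (s : Set (Euc d)), f y ≤ f v := by
    intro y hy
    rcases eq_or_ne y v with rfl | hne
    · exact le_rfl
    · have hy' : y ∈ convexHull ℝ ((s.erase v : Finset (Euc d)) : Set (Euc d)) :=
        subset_convexHull ℝ _ (by exact_mod_cast Finset.mem_erase.2 ⟨hne, by exact_mod_cast hy⟩)
      exact le_of_lt (lt_trans (hfu y hy') huv)
  ext x
  simp only [Set.mem_singleton_iff, Set.mem_setOf_eq]
  constructor
  · rintro rfl
    exact ⟨subset_convexHull ℝ _ hv, fun y hy => clm_le_on_convexHull hmax hy⟩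
  · rintro ⟨hxP, hxmax⟩
    have hfx : f x = f v :=
      le_antisymm (clm_le_on_convexHull hmax hxP) (hxmax v (subset_convexHull ℝ _ hv))
    rw [Finset.convexHull_eq] at hxP
    obtain ⟨w, hw0, hw1, hwx⟩ := hxP
    rw [Finset.centerMass_eq_of_sum_1 _ _ hw1] at hwx
    simp only [id_eq] at hwx
    by_contra hxv
    have hterm : ∀ y ∈ s, w y * f y ≤ w y * f v := fun y hy =>
      mul_le_mul_of_nonneg_left (hmax y hy) (hw0 y hy)
    have hstrict : ∃ y ∈ s, w y * f y < w y * f v := by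
      by_cases hwv : ∀ y ∈ s, y ≠ v → w y = 0
      · exfalso
        apply hxv
        have hone : ∀ y ∈ s, w y • y = (if y = v then w y • y else 0) := by
          intro y hy
          split
          · rfl
          · rename_i h; rw [hwv y hy h, zero_smul]
        have hwv1 : w v = 1 := by
          rw [← hw1]
          exact (Finset.sum_eq_single_of_mem v hv fun y hy hne => hwv y hy hne).symm
        rw [← hwx, Finset.sum_congr rfl hone, Finset.sum_ite_eq' s v (fun y => w y • y),
          if_pos hv, hwv1, one_smul]
      · push_neg at hwv
        obtain ⟨y, hy, hyne, hwy⟩ := hwv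
        have hwyp : 0 < w y := lt_of_le_of_ne (hw0 y hy) (Ne.symm hwy)
        have hfy : f y < f v := by
          have hy' : y ∈ convexHull ℝ ((s.erase v : Finset (Euc d)) : Set (Euc d)) :=
            subset_convexHull ℝ _ (by exact_mod_cast Finset.mem_erase.2 ⟨hyne, hy⟩)
          exact lt_trans (hfu y hy') huv
        exact ⟨y, hy, by nlinarith⟩
    have hlt : f x < f v := by
      have h1 : f x = ∑ y ∈ s, w y * f y := by
        rw [← hwx, map_sum]
        exact Finset.sum_congr rfl fun y _ => by rw [map_smul, smul_eq_mul]
      have h2 : ∑ y ∈ s, w y * f v = f v := by rw [← Finset.sum_mul, hw1, one_mul]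
      obtain ⟨y₀, hy₀, hy₀s⟩ := hstrict
      have h3 := Finset.sum_lt_sum hterm ⟨y₀, hy₀, hy₀s⟩
      rw [h1]
      linarith
    exact absurd hfx (ne_of_lt hlt)

end GramAngles
namespace GramAngles

open Classical

variable {d : ℕ}

lemma normalCone_singleton (v : Euc d) (G : Set (Euc d)) :
    normalCone {v} G = {c | ∀ y ∈ G, ⟪c, y⟫_ℝ ≤ ⟪c, v⟫_ℝ} := by
  ext c
  simp [normalCone]

lemma normalCone_singleton_conv (v : Euc d) (t : Finset (Euc d)) :
    normalCone {v} (convexHull ℝ (t : Set (Euc d))) = NvS t v := by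
  rw [normalCone_singleton]
  ext c
  constructor
  · intro h y hy
    exact h y (subset_convexHull ℝ _ hy)
  · intro h y hy
    exact inner_le_on_convexHull (fun z hz => h z (by exact_mod_cast hz)) hy

lemma outerCone_singleton (v : Euc d) (G : Set (Euc d)) :
    outerCone {v} G = normalCone {v} G := by
  unfold outerCone
  rw [vectorSpan_singleton, Submodule.bot_coe, Set.add_singleton]
  simp

lemma extreme_mem_of_face {P F : Set (Euc d)} (hF : IsFace P F) {v : Euc d}
    (hv : v ∈ F.extremePoints ℝ) : v ∈ P.extremePoints ℝ := by
  rw [← isExtreme_singleton] at hv ⊢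
  exact hF.isExtreme.trans hv

lemma extreme_of_mem_face {P F : Set (Euc d)} (hFP : F ⊆ P) {v : Euc d}
    (hvP : v ∈ P.extremePoints ℝ) (hvF : v ∈ F) : v ∈ F.extremePoints ℝ := by
  rw [mem_extremePoints] at hvP ⊢
  exact ⟨hvF, fun x₁ h₁ x₂ h₂ hseg => hvP.2 x₁ (hFP h₁) x₂ (hFP h₂) hseg⟩

lemma sdim_singleton (v : Euc d) : sdim ({v} : Set (Euc d)) = 0 := by
  unfold sdim
  rw [vectorSpan_singleton]
  exact finrank_bot ℝ _

lemma eq_singleton_of_sdim_zero {F : Set (Euc d)} (hne : F.Nonempty) (h0 : sdim F = 0) :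
    ∃ v, F = {v} := by
  obtain ⟨v, hv⟩ := hne
  refine ⟨v, Set.eq_singleton_iff_unique_mem.2 ⟨hv, fun x hx => ?_⟩⟩
  have hbot : vectorSpan ℝ F = ⊥ := Submodule.finrank_eq_zero.1 h0
  have hm : x -ᵥ v ∈ vectorSpan ℝ F := vsub_mem_vectorSpan ℝ hx hv
  rw [hbot, Submodule.mem_bot, vsub_eq_sub, sub_eq_zero] at hm
  exact hm

lemma isFace_self (P : Set (Euc d)) : IsFace P P := fun _ => ⟨0, by ext x; simp⟩

/-- Exposed points of a face, with the sum-1 property and characterization of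
the 0-dimensional subfaces. -/
lemma sum_extAngle_vertices (α : ConeAngle d) {s : Finset (Euc d)} (hs : s.Nonempty)
    {G : Set (Euc d)} (hG : IsFace (convexHull ℝ (s : Set (Euc d))) G) (hGne : G.Nonempty) :
    ∃ W : Finset (Euc d),
      ((fun v => ({v} : Set (Euc d))) '' (W : Set (Euc d))
        = {F | IsFace (convexHull ℝ (s : Set (Euc d))) F ∧ F.Nonempty ∧ sdim F = 0 ∧ F ⊆ G}) ∧
      ∑ v ∈ W, extAngle α {v} G = 1 := by
  classical
  obtain ⟨t, hts, htne, hGt, _⟩ := face_structure hs hG hGne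
  set P := convexHull ℝ (s : Set (Euc d)) with hP
  set W := t.filter (fun v => v ∈ G.extremePoints ℝ) with hW
  have hGP : G ⊆ P := hG.subset
  -- the angle of a vertex normal cone
  have hangle : ∀ v, extAngle α {v} G = α.toFun (NvS t v) := by
    intro v
    rw [extAngle, outerCone_singleton, hGt, normalCone_singleton_conv]
  -- non-extreme generators contribute zero
  have hzero : ∀ v ∈ t, v ∉ W → α.toFun (NvS t v) = 0 := by
    intro v hvt hvW
    have hvnotext : v ∉ G.extremePoints ℝ := fun h => hvW (Finset.mem_filter.2 ⟨hvt, h⟩)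
    have hvmem : v ∈ convexHull ℝ ((t.erase v : Finset (Euc d)) : Set (Euc d)) := by
      rcases exposed_or_mem_erase hvt with h | h
      · have hvexp := mem_exposedPoints_iff_exposed_singleton.2 h
        have hvext : v ∈ G.extremePoints ℝ := by
          rw [hGt]
          exact exposedPoints_subset_extremePoints hvexp
        exact absurd hvext hvnotext
      · exact h
    -- a representation of v over the other generators
    rw [Finset.convexHull_eq] at hvmem
    obtain ⟨w, hw0, hw1, hwv⟩ := hvmem
    rw [Finset.centerMass_eq_of_sum_1 _ _ hw1] at hwv
    simp only [id_eq] at hwv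
    obtain ⟨y₀, hy₀, hwy₀⟩ : ∃ y ∈ t.erase v, w y ≠ 0 := by
      by_contra h
      push_neg at h
      have h0 : (1 : ℝ) = 0 := by rw [← hw1]; exact Finset.sum_eq_zero h
      exact one_ne_zero h0
    have hwy₀p : 0 < w y₀ := lt_of_le_of_ne (hw0 y₀ hy₀) (Ne.symm hwy₀)
    have hy₀v : y₀ ≠ v := (Finset.mem_erase.1 hy₀).1
    -- the normal cone is thin
    have hsub : NvS t v ⊆ {c | ⟪y₀ - v, c⟫_ℝ = 0} := by
      intro c hc
      have hterm : ∀ y ∈ t.erase v, 0 ≤ w y * (⟪c, v⟫_ℝ - ⟪c, y⟫_ℝ) := by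
        intro y hy
        exact mul_nonneg (hw0 y hy) (sub_nonneg.2 (hc y (Finset.mem_of_mem_erase hy)))
      have hsum : ∑ y ∈ t.erase v, w y * (⟪c, v⟫_ℝ - ⟪c, y⟫_ℝ) = 0 := by
        have h1 : ⟪c, v⟫_ℝ = ∑ y ∈ t.erase v, w y * ⟪c, y⟫_ℝ := by
          conv_lhs => rw [← hwv]
          rw [inner_sum]
          exact Finset.sum_congr rfl fun y _ => real_inner_smul_right c y (w y)
        have h2 : ∑ y ∈ t.erase v, w y * ⟪c, v⟫_ℝ = ⟪c, v⟫_ℝ := by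
          rw [← Finset.sum_mul, hw1, one_mul]
        have h3 : ∀ y ∈ t.erase v, w y * (⟪c, v⟫_ℝ - ⟪c, y⟫_ℝ)
            = w y * ⟪c, v⟫_ℝ - w y * ⟪c, y⟫_ℝ := fun y _ => by ring
        rw [Finset.sum_congr rfl h3, Finset.sum_sub_distrib, h2, ← h1, sub_self]
      have hy₀zero := (Finset.sum_eq_zero_iff_of_nonneg hterm).1 hsum y₀ hy₀
      have : ⟪c, v⟫_ℝ - ⟪c, y₀⟫_ℝ = 0 := by
        rcases mul_eq_zero.1 hy₀zero with h | h
        · exact absurd h hwy₀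
        · exact h
      rw [Set.mem_setOf_eq, inner_sub_left]
      linarith [real_inner_comm c y₀, real_inner_comm c v]
    obtain ⟨T', hT'⟩ := FG_inter_NvS (C := Set.univ) univ_genBy t v
    rw [Set.univ_inter] at hT'
    rw [hT']
    exact α.simple' _ (genBy_isPolyhedralCone _)
      (sdim_lt_of_subset_ker (sub_ne_zero.2 hy₀v) (hT' ▸ hsub))
  -- sum over the extreme generators
  have hsum1 : ∑ v ∈ W, extAngle α {v} G = 1 := by
    have h1 : ∑ v ∈ W, α.toFun (NvS t v) = ∑ v ∈ t, α.toFun (NvS t v) :=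
      Finset.sum_subset (Finset.filter_subset _ _) hzero
    rw [Finset.sum_congr rfl fun v _ => hangle v, h1, key_core α t htne]
  refine ⟨W, ?_, hsum1⟩
  -- the set of 0-dimensional subfaces
  ext F
  simp only [Set.mem_image, Set.mem_setOf_eq, Finset.mem_coe]
  constructor
  · rintro ⟨v, hvW, rfl⟩
    rw [hW, Finset.mem_filter] at hvW
    obtain ⟨hvt, hvext⟩ := hvW
    have hvG : v ∈ G := hvext.1
    have hvextP : v ∈ P.extremePoints ℝ := extreme_mem_of_face hG hvext
    have hvs : v ∈ s := extremePoints_convexHull_subset hvextP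
    have hface : IsFace P {v} := by
      rcases exposed_or_mem_erase hvs with h | h
      · exact h
      · exact absurd h (extreme_not_mem_erase hvextP)
    exact ⟨hface, ⟨v, rfl⟩, sdim_singleton v, Set.singleton_subset_iff.2 hvG⟩
  · rintro ⟨hFface, hFne, hF0, hFG⟩
    obtain ⟨v, rfl⟩ := eq_singleton_of_sdim_zero hFne hF0
    have hvextP : v ∈ P.extremePoints ℝ := isExtreme_singleton.1 hFface.isExtreme
    have hvG : v ∈ G := hFG rfl
    have hvextG : v ∈ G.extremePoints ℝ := extreme_of_mem_face hGP hvextP hvG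
    have hvt : v ∈ t := by
      have := hGt ▸ hvextG
      exact extremePoints_convexHull_subset this
    exact ⟨v, Finset.mem_filter.2 ⟨hvt, hvextG⟩, rfl⟩

end GramAngles
namespace GramAngles

open Classical

variable {d : ℕ}

lemma faces_finite {s : Finset (Euc d)} (hs : s.Nonempty) :
    {F : Set (Euc d) | IsFace (convexHull ℝ (s : Set (Euc d))) F ∧ F.Nonempty}.Finite := by
  classical
  apply Set.Finite.of_finite_image (f := fun F => s.filter (fun y => y ∈ F))
  · refine Set.Finite.subset (s.powerset : Finset (Finset (Euc d))).finite_toSet ?_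
    rintro t ⟨F, _, rfl⟩
    exact Finset.mem_coe.2 (Finset.mem_powerset.2 (Finset.filter_subset _ _))
  · rintro F₁ ⟨hf1, hn1⟩ F₂ ⟨hf2, hn2⟩ heq
    obtain ⟨t₁, _, _, he1, ht1⟩ := face_structure hs hf1 hn1
    obtain ⟨t₂, _, _, he2, ht2⟩ := face_structure hs hf2 hn2
    have heq' : s.filter (fun y => y ∈ F₁) = s.filter (fun y => y ∈ F₂) := heq
    rw [he1, ht1, heq', ← ht2, ← he2]

lemma lists_finite {X : Type*} {A : Set X} (hA : A.Finite) (n : ℕ) :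
    {l : List X | l.length = n ∧ ∀ x ∈ l, x ∈ A}.Finite := by
  induction n with
  | zero =>
    refine Set.Finite.subset (Set.finite_singleton []) ?_
    rintro l ⟨hl, -⟩
    exact List.length_eq_zero_iff.1 hl
  | succ n ih =>
    refine Set.Finite.subset (Set.Finite.image (fun p : X × List X => p.1 :: p.2) (hA.prod ih)) ?_
    rintro l ⟨hl, hmem⟩
    cases l with
    | nil => simp at hl
    | cons x r =>
      refine ⟨(x, r), ⟨hmem x List.mem_cons_self, ?_, ?_⟩, rfl⟩
      · simpa using hl
      · exact fun y hy => hmem y (List.mem_cons_of_mem x hy)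

lemma faceChains_finite {s : Finset (Euc d)} (hs : s.Nonempty) (S : Finset ℕ) :
    (faceChains (convexHull ℝ (s : Set (Euc d))) S).Finite := by
  refine Set.Finite.subset (lists_finite (faces_finite hs) ((S.sort (· ≤ ·)).length)) ?_
  rintro l ⟨h1, _, h3⟩
  exact ⟨by rw [← h3, List.length_map], fun F hF => h1 F hF⟩

end GramAngles
namespace GramAngles

/-- Proposition: relations on exterior flag-angles.
For a cone angle `α`, a `d`-dimensional polytope `P ⊂ ℝ^d` and `S ⊆ {1,…,d-1}`:
`α̌_S(P) = α̌_{S ∪ {0}}(P)`. -/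
theorem statement14 (d : ℕ) (hd : 0 < d) (α : ConeAngle d) (P : Set (Euc d))
    (hP : IsPolytope P) (hdim : sdim P = d)
    (S : Finset ℕ) (hS : ∀ s ∈ S, 1 ≤ s ∧ s ≤ d - 1) :
    extFlag α P S = extFlag α P (insert 0 S) := by
  classical
  obtain ⟨s, hs, rfl⟩ := hP
  set P := convexHull ℝ (s : Set (Euc d)) with hPdef
  have hPne : P.Nonempty := by
    obtain ⟨z, hz⟩ := hs
    exact ⟨z, subset_convexHull ℝ _ (Finset.mem_coe.2 hz)⟩
  have h0S : (0 : ℕ) ∉ S := fun h => by have := (hS 0 h).1; omega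
  have hsort : (insert 0 S).sort (· ≤ ·) = 0 :: S.sort (· ≤ ·) :=
    Finset.sort_insert _ (fun b _ => Nat.zero_le b) h0S
  have hgcons : ∀ (F₀ : Set (Euc d)) (l : List (Set (Euc d))),
      (List.zipWith (extAngle α) (F₀ :: l) ((F₀ :: l).drop 1 ++ [P])).prod
        = extAngle α F₀ (l.headD P)
          * (List.zipWith (extAngle α) l (l.drop 1 ++ [P])).prod := by
    intro F₀ l
    cases l with
    | nil => simp
    | cons F₁ r => simp
  have hCfin : (faceChains P S).Finite := faceChains_finite hs S
  have hC'fin : (faceChains P (insert 0 S)).Finite := faceChains_finite hs (insert 0 S)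
  have hDfin : ∀ l : List (Set (Euc d)),
      {F : Set (Euc d) | IsFace P F ∧ F.Nonempty ∧ sdim F = 0 ∧ F ⊆ l.headD P}.Finite :=
    fun l => Set.Finite.subset (faces_finite hs) (fun F hF => ⟨hF.1, hF.2.1⟩)
  have hhead : ∀ l ∈ faceChains P S, IsFace P (l.headD P) ∧ (l.headD P).Nonempty := by
    rintro l ⟨h1, -, -⟩
    cases l with
    | nil => exact ⟨isFace_self P, hPne⟩
    | cons F₁ r => exact h1 F₁ List.mem_cons_self
  have hinner : ∀ G : Set (Euc d), IsFace P G → G.Nonempty →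
      ∀ hf : {F : Set (Euc d) | IsFace P F ∧ F.Nonempty ∧ sdim F = 0 ∧ F ⊆ G}.Finite,
        ∑ F ∈ hf.toFinset, extAngle α F G = 1 := by
    intro G hGf hGn hf
    obtain ⟨W, hWeq, hWsum⟩ := sum_extAngle_vertices α hs hGf hGn
    have htf : hf.toFinset = W.image (fun v => ({v} : Set (Euc d))) := by
      ext F
      rw [Set.Finite.mem_toFinset]
      constructor
      · intro h
        have : F ∈ (fun v => ({v} : Set (Euc d))) '' (W : Set (Euc d)) := by rw [hWeq]; exact h
        obtain ⟨v, hv, rfl⟩ := this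
        exact Finset.mem_image.2 ⟨v, Finset.mem_coe.1 hv, rfl⟩
      · intro h
        obtain ⟨v, hv, rfl⟩ := Finset.mem_image.1 h
        have : ({v} : Set (Euc d)) ∈ (fun v => ({v} : Set (Euc d))) '' (W : Set (Euc d)) :=
          ⟨v, Finset.mem_coe.2 hv, rfl⟩
        rw [hWeq] at this
        exact this
    rw [htf, Finset.sum_image (fun a _ b _ h => Set.singleton_eq_singleton_iff.1 h)]
    exact hWsum
  have hdecomp : ∀ l' : List (Set (Euc d)), l' ∈ faceChains P (insert 0 S) ↔
      ∃ F₀ l, l' = F₀ :: l ∧ l ∈ faceChains P S ∧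
        (IsFace P F₀ ∧ F₀.Nonempty ∧ sdim F₀ = 0 ∧ F₀ ⊆ l.headD P) := by
    intro l'
    constructor
    · rintro ⟨h1, h2, h3⟩
      rw [hsort] at h3
      cases l' with
      | nil => simp at h3
      | cons F₀ l =>
        rw [List.map_cons] at h3
        injection h3 with h30 h3l
        have hl : l ∈ faceChains P S :=
          ⟨fun F hF => h1 F (List.mem_cons_of_mem _ hF), (List.isChain_cons.1 h2).2, h3l⟩
        have hF₀ := h1 F₀ List.mem_cons_self
        refine ⟨F₀, l, rfl, hl, hF₀.1, hF₀.2, h30, ?_⟩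
        cases l with
        | nil => exact hF₀.1.subset
        | cons F₁ r => exact ((List.isChain_cons_cons.1 h2).1).subset
    · rintro ⟨F₀, l, rfl, ⟨h1, h2, h3⟩, hf, hne, h0, hsub⟩
      refine ⟨?_, ?_, ?_⟩
      · intro F hF
        rcases List.mem_cons.1 hF with rfl | hF
        · exact ⟨hf, hne⟩
        · exact h1 F hF
      · rw [List.Chain', List.isChain_cons]
        refine ⟨?_, h2⟩
        intro F₁ hF₁
        cases l with
        | nil => simp at hF₁
        | cons G r =>
          have hFG : G = F₁ := by simpa using hF₁
          rw [← hFG]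
          have hd1 : sdim G ∈ S.sort (· ≤ ·) := by
            rw [← h3]
            exact List.mem_map_of_mem (f := sdim) List.mem_cons_self
          have hd2 := (hS _ ((Finset.mem_sort _).1 hd1)).1
          refine (Set.ssubset_iff_subset_ne).2 ⟨hsub, fun hFeq => ?_⟩
          rw [hFeq] at h0
          omega
      · rw [hsort, List.map_cons, h0, h3]
  -- the computation
  rw [extFlag, extFlag, finsum_mem_eq_finite_toFinset_sum _ hCfin,
    finsum_mem_eq_finite_toFinset_sum _ hC'fin]
  have hbij : ∑ l' ∈ hC'fin.toFinset, (List.zipWith (extAngle α) l' (l'.drop 1 ++ [P])).prod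
      = ∑ p ∈ hCfin.toFinset.sigma (fun l => (hDfin l).toFinset),
          (List.zipWith (extAngle α) (p.2 :: p.1) ((p.2 :: p.1).drop 1 ++ [P])).prod := by
    refine Finset.sum_nbij'
      (i := fun l' => (⟨l'.tail, l'.headD ∅⟩ : (_ : List (Set (Euc d))) × Set (Euc d)))
      (j := fun p => p.2 :: p.1) ?_ ?_ ?_ ?_ ?_
    · intro l' hl'
      rw [Set.Finite.mem_toFinset] at hl'
      obtain ⟨F₀, l, rfl, hl, hD⟩ := (hdecomp l').1 hl'
      rw [Finset.mem_sigma]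
      exact ⟨(Set.Finite.mem_toFinset hCfin).2 hl, (Set.Finite.mem_toFinset (hDfin l)).2 hD⟩
    · intro p hp
      rw [Finset.mem_sigma] at hp
      rw [Set.Finite.mem_toFinset]
      exact (hdecomp _).2 ⟨p.2, p.1, rfl, (Set.Finite.mem_toFinset hCfin).1 hp.1,
        (Set.Finite.mem_toFinset (hDfin p.1)).1 hp.2⟩
    · intro l' hl'
      rw [Set.Finite.mem_toFinset] at hl'
      obtain ⟨F₀, l, rfl, -, -⟩ := (hdecomp l').1 hl'
      rfl
    · rintro ⟨l, F₀⟩ hp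
      rfl
    · intro l' hl'
      rw [Set.Finite.mem_toFinset] at hl'
      obtain ⟨F₀, l, rfl, -, -⟩ := (hdecomp l').1 hl'
      rfl
  rw [hbij, Finset.sum_sigma]
  refine Finset.sum_congr rfl fun l hl => ?_
  rw [Set.Finite.mem_toFinset] at hl
  have hhd := hhead l hl
  have hsum1 : ∑ F₀ ∈ (hDfin l).toFinset, extAngle α F₀ (l.headD P) = 1 :=
    hinner (l.headD P) hhd.1 hhd.2 (hDfin l)
  calc (List.zipWith (extAngle α) l (l.drop 1 ++ [P])).prod
      = (∑ F₀ ∈ (hDfin l).toFinset, extAngle α F₀ (l.headD P))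
          * (List.zipWith (extAngle α) l (l.drop 1 ++ [P])).prod := by
        rw [hsum1, one_mul]
    _ = ∑ F₀ ∈ (hDfin l).toFinset,
          (List.zipWith (extAngle α) (F₀ :: l) ((F₀ :: l).drop 1 ++ [P])).prod := by
        rw [Finset.sum_mul]
        exact Finset.sum_congr rfl fun F₀ _ => (hgcons F₀ l).symm

end GramAngles
end
end
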